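/- Let f : ℝ → ℝ be infinitely differentiable and x₀ ∈ ℝ with f'(x₀) ≠ 0. For Δx > 0 set f_m = f(x₀ + mΔx), define the Jiang–Shu smoothness indicators β₀(Δx) = (13/12)(f₋₂ − 2f₋₁ + f₀)² + (1/4)(f₋₂ − 4f₋₁ + 3f₀)², β₁(Δx) = (13/12)(f₋₁ − 2f₀ + f₁)² + (1/4)(f₁ − f₋₁)², β₂(Δx) = (13/12)(f₀ − 2f₁ + f₂)² + (1/4)(3f₀ − 4f₁ + f₂)², and with d₀ = 1/10, d₁ = 6/10, d₂ = 3/10 set α_k(Δx) = d_k/β_k(Δx)² and ω_k(Δx) = α_k(Δx)/(α₀(Δx) + α₁(Δx) + α₂(Δx)) (taking ε = 0). Then for each k ∈ {0,1,2}, ω_k(Δx) − d_k = O(Δx²) as Δx → 0⁺. -/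

import Mathlib

open Filter Asymptotics Topology Set

set_option maxHeartbeats 4000000


lemma mvt_step (u v : ℝ → ℝ) (hu : ∀ s, HasDerivAt u (v s) s) (h0 : u 0 = 0)
    (C t : ℝ) (hC : ∀ s, |s| ≤ |t| → |v s| ≤ C) : |u t| ≤ C * |t| := by
  have habs : ∀ s ∈ Set.uIcc (0:ℝ) t, |s| ≤ |t| := by
    intro s hs
    rw [Set.mem_uIcc] at hs
    rcases hs with ⟨h1, h2⟩ | ⟨h1, h2⟩ <;> cases abs_cases t <;> cases abs_cases s <;> linarith
  have := Convex.norm_image_sub_le_of_norm_hasDerivWithin_le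
    (f := u) (f' := v) (s := Set.uIcc (0:ℝ) t) (C := C)
    (fun x _ => (hu x).hasDerivWithinAt) (fun x hx => hC x (habs x hx))
    (convex_uIcc 0 t) Set.left_mem_uIcc Set.right_mem_uIcc
  simpa [h0, Real.norm_eq_abs] using this

lemma taylor2_bound (f : ℝ → ℝ) (hf : ContDiff ℝ (⊤ : ℕ∞) f) (x₀ : ℝ) :
    ∃ M : ℝ, 0 ≤ M ∧ ∀ t : ℝ, |t| ≤ 1 →
      |f (x₀ + t) - (f x₀ + deriv f x₀ * t + (deriv (deriv f) x₀ / 2) * t ^ 2)| ≤ M * |t| ^ 3 := by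
  have hfi : ContDiff ℝ ((⊤ : ℕ∞) : WithTop ℕ∞) f := hf.of_le (by simp)
  set f1 := deriv f with hf1def
  set f2 := deriv f1 with hf2def
  set f3 := deriv f2 with hf3def
  have hf1 : ContDiff ℝ ((⊤ : ℕ∞) : WithTop ℕ∞) f1 := (contDiff_infty_iff_deriv.mp hfi).2
  have hf2 : ContDiff ℝ ((⊤ : ℕ∞) : WithTop ℕ∞) f2 := (contDiff_infty_iff_deriv.mp hf1).2
  have hf3 : ContDiff ℝ ((⊤ : ℕ∞) : WithTop ℕ∞) f3 := (contDiff_infty_iff_deriv.mp hf2).2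
  set a := f x₀
  set b := f1 x₀
  set q := f2 x₀ / 2 with hq
  -- the three functions
  set g : ℝ → ℝ := fun t => f (x₀ + t) - (a + b * t + q * t ^ 2) with hg
  set g1 : ℝ → ℝ := fun t => f1 (x₀ + t) - (b + 2 * q * t) with hg1
  set g2 : ℝ → ℝ := fun t => f2 (x₀ + t) - 2 * q with hg2
  set g3 : ℝ → ℝ := fun t => f3 (x₀ + t) with hg3
  have hcomp : ∀ (u : ℝ → ℝ), Differentiable ℝ u → ∀ t : ℝ,
      HasDerivAt (fun s => u (x₀ + s)) (deriv u (x₀ + t)) t := by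
    intro u hu t
    have h1 : HasDerivAt (fun s : ℝ => x₀ + s) 1 t := by
      simpa using (hasDerivAt_id t).const_add x₀
    have h2 := (hu (x₀ + t)).hasDerivAt.comp t h1
    rw [mul_one] at h2
    exact h2
  have hdg : ∀ t, HasDerivAt g (g1 t) t := by
    intro t
    have hp : HasDerivAt (fun t : ℝ => a + b * t + q * t ^ 2) (b + 2 * q * t) t := by
      have h1 : HasDerivAt (fun t : ℝ => a + b * t) b t := by
        simpa using ((hasDerivAt_id t).const_mul b).const_add a
      have h2 : HasDerivAt (fun t : ℝ => q * t ^ 2) (q * (2 * t)) t := by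
        simpa using (hasDerivAt_pow 2 t).const_mul q
      exact (h1.add h2).congr_deriv (by ring)
    exact (hcomp f (hf.differentiable (by simp)) t).sub hp
  have hdg1 : ∀ t, HasDerivAt g1 (g2 t) t := by
    intro t
    have hp : HasDerivAt (fun t : ℝ => b + 2 * q * t) (2 * q) t := by
      simpa using ((hasDerivAt_id t).const_mul (2*q)).const_add b
    exact (hcomp f1 (hf1.differentiable (by simp)) t).sub hp
  have hdg2 : ∀ t, HasDerivAt g2 (g3 t) t := by
    intro t
    have h3 := (hcomp f2 (hf2.differentiable (by simp)) t).sub (hasDerivAt_const t (2*q))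
    rw [sub_zero] at h3
    exact h3
  -- bound on g3 on [-1,1]
  obtain ⟨M0, hM0⟩ := (isCompact_Icc (a := (-1:ℝ)) (b := 1)).exists_bound_of_continuousOn
    ((hf3.continuous.comp (continuous_const.add continuous_id)).continuousOn)
  set M := max M0 0 with hM
  have hMnn : 0 ≤ M := le_max_right _ _
  refine ⟨M, hMnn, ?_⟩
  intro t ht
  have hg3bd : ∀ s : ℝ, |s| ≤ |t| → |g3 s| ≤ M := by
    intro s hs
    have hs1 : s ∈ Icc (-1:ℝ) 1 := by
      rw [mem_Icc]; cases abs_cases s <;> constructor <;> linarith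
    calc |g3 s| ≤ M0 := by simpa [Real.norm_eq_abs, hg3] using hM0 s hs1
    _ ≤ M := le_max_left _ _
  have hg20 : g2 0 = 0 := by simp [hg2, hq]; ring
  have hg10 : g1 0 = 0 := by simp [hg1]; exact sub_self _
  have hg0 : g 0 = 0 := by simp [hg]; exact sub_self _
  have hb2 : |g2 t| ≤ M * |t| := mvt_step g2 g3 hdg2 hg20 M t hg3bd
  have hb1 : |g1 t| ≤ M * |t| * |t| := by
    refine mvt_step g1 g2 hdg1 hg10 (M * |t|) t ?_
    intro s hs
    have := mvt_step g2 g3 hdg2 hg20 M s (fun r hr => hg3bd r (hr.trans hs))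
    nlinarith [abs_nonneg s]
  have hb0 : |g t| ≤ M * |t| * |t| * |t| := by
    refine mvt_step g g1 hdg hg0 (M * |t| * |t|) t ?_
    intro s hs
    have key : |g1 s| ≤ M * |s| * |s| := by
      refine mvt_step g1 g2 hdg1 hg10 (M * |s|) s ?_
      intro r hr
      have := mvt_step g2 g3 hdg2 hg20 M r (fun w hw => hg3bd w ((hw.trans hr).trans hs))
      nlinarith [abs_nonneg r]
    nlinarith [abs_nonneg s, abs_nonneg t, hMnn, mul_le_mul hs hs (abs_nonneg s) (abs_nonneg t)]
  calc |f (x₀ + t) - (f x₀ + deriv f x₀ * t + (deriv (deriv f) x₀ / 2) * t ^ 2)| = |g t| := by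
        simp [hg]; rfl
  _ ≤ M * |t| * |t| * |t| := hb0
  _ = M * |t| ^ 3 := by ring


lemma omega_bound (B0 B1 B2 L U E d0 d1 d2 : ℝ) (hL : 0 < L)
    (hB0 : L ≤ B0) (hB1 : L ≤ B1) (hB2 : L ≤ B2)
    (hU1 : B1 ≤ U) (hU2 : B2 ≤ U)
    (hE1 : |B1 - B0| ≤ E) (hE2 : |B2 - B0| ≤ E)
    (hd0 : 0 < d0) (hd1 : 0 < d1) (hd2 : 0 < d2) (hsum : d0 + d1 + d2 = 1) :
    |d0 / B0 / (d0 / B0 + d1 / B1 + d2 / B2) - d0| ≤ E * U / L ^ 2 := by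
  have hB0p : 0 < B0 := hL.trans_le hB0
  have hB1p : 0 < B1 := hL.trans_le hB1
  have hB2p : 0 < B2 := hL.trans_le hB2
  have hEnn : 0 ≤ E := (abs_nonneg _).trans hE1
  have hUnn : 0 ≤ U := (hL.le.trans hB1).trans hU1
  have hTp : 0 < d0 * (B1 * B2) + d1 * (B0 * B2) + d2 * (B0 * B1) := by positivity
  have key : d0 / B0 / (d0 / B0 + d1 / B1 + d2 / B2) - d0
      = d0 * (d1 * B2 * (B1 - B0) + d2 * B1 * (B2 - B0))
        / (d0 * (B1 * B2) + d1 * (B0 * B2) + d2 * (B0 * B1)) := by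
    rw [div_add_div _ _ hB0p.ne' hB1p.ne', div_add_div _ _ (by positivity) hB2p.ne']
    rw [show (d0 * B1 + B0 * d1) * B2 + B0 * B1 * d2
      = d0 * (B1 * B2) + d1 * (B0 * B2) + d2 * (B0 * B1) by ring]
    have h5 : d0 / B0 / ((d0 * (B1 * B2) + d1 * (B0 * B2) + d2 * (B0 * B1)) / (B0 * B1 * B2))
        = d0 * (B1 * B2) / (d0 * (B1 * B2) + d1 * (B0 * B2) + d2 * (B0 * B1)) := by
      rw [div_div_eq_mul_div]
      congr 1
      field_simp
    rw [h5, div_sub' hTp.ne']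
    congr 1
    linear_combination (-(d0 * (B1 * B2))) * hsum
  rw [key, abs_div, abs_of_pos hTp]
  have hnum : |d0 * (d1 * B2 * (B1 - B0) + d2 * B1 * (B2 - B0))|
      ≤ d0 * ((d1 + d2) * (U * E)) := by
    have h1 : |d1 * B2 * (B1 - B0)| ≤ d1 * (U * E) := by
      rw [abs_mul, abs_mul, abs_of_pos hd1, abs_of_pos hB2p]
      nlinarith [hd1.le, abs_nonneg (B1 - B0), mul_le_mul hU2 hE1 (abs_nonneg _) hUnn]
    have h2 : |d2 * B1 * (B2 - B0)| ≤ d2 * (U * E) := by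
      rw [abs_mul, abs_mul, abs_of_pos hd2, abs_of_pos hB1p]
      nlinarith [hd2.le, abs_nonneg (B2 - B0), mul_le_mul hU1 hE2 (abs_nonneg _) hUnn]
    rw [abs_mul, abs_of_pos hd0]
    have h3 := abs_add_le (d1 * B2 * (B1 - B0)) (d2 * B1 * (B2 - B0))
    nlinarith [hd0.le]
  have hden : d0 * L ^ 2 ≤ d0 * (B1 * B2) + d1 * (B0 * B2) + d2 * (B0 * B1) := by
    nlinarith [mul_le_mul hB1 hB2 hL.le hB1p.le, hd0.le,
      mul_pos hB0p hB2p, mul_pos hB0p hB1p, hd1.le, hd2.le]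
  calc |d0 * (d1 * B2 * (B1 - B0) + d2 * B1 * (B2 - B0))|
        / (d0 * (B1 * B2) + d1 * (B0 * B2) + d2 * (B0 * B1))
      ≤ d0 * ((d1 + d2) * (U * E)) / (d0 * L ^ 2) := by
        apply div_le_div₀ (by positivity) hnum (by positivity) hden
  _ = (d1 + d2) * (U * E) / L ^ 2 := by field_simp
  _ ≤ E * U / L ^ 2 := by
        apply div_le_div_of_nonneg_right ?_ (by positivity)
        nlinarith [mul_nonneg hd0.le (mul_nonneg hUnn hEnn)]


lemma beta_err (b q M h ρ w : ℝ) (h0 : 0 < h) (h1 : h ≤ 1) (hM : 0 ≤ M)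
    (hρ : |ρ| ≤ 10 * M * h ^ 3) (hw : |w| ≤ 12 * M * h ^ 3) :
    |13 / 12 * (2 * q * h ^ 2 + ρ) ^ 2 + b * h * w + w ^ 2 / 4|
      ≤ (13 / 12 * (2 * |q| + 10 * M) ^ 2 + 12 * |b| * M + 36 * M ^ 2) * h ^ 4 := by
  have hh2 : (0:ℝ) ≤ h ^ 2 := by positivity
  have hh3 : h ^ 3 ≤ h ^ 2 := by nlinarith
  have hX : |2 * q * h ^ 2 + ρ| ≤ (2 * |q| + 10 * M) * h ^ 2 := by
    have := abs_add_le (2 * q * h ^ 2) ρ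
    have h2 : |2 * q * h ^ 2| = 2 * |q| * h ^ 2 := by
      rw [abs_mul, abs_mul]; simp [abs_of_nonneg hh2]
    nlinarith [hρ, mul_nonneg hM hh2]
  have hX2 : (2 * q * h ^ 2 + ρ) ^ 2 ≤ ((2 * |q| + 10 * M) * h ^ 2) ^ 2 := by
    nlinarith [sq_abs (2 * q * h ^ 2 + ρ), pow_le_pow_left₀ (abs_nonneg _) hX 2]
  have hbw : |b * h * w| ≤ |b| * h * (12 * M * h ^ 3) := by
    rw [abs_mul, abs_mul, abs_of_pos h0]
    exact mul_le_mul_of_nonneg_left hw (by positivity)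
  have hw2 : w ^ 2 ≤ (12 * M * h ^ 3) ^ 2 := by
    nlinarith [sq_abs w, pow_le_pow_left₀ (abs_nonneg w) hw 2]
  have tri : |13 / 12 * (2 * q * h ^ 2 + ρ) ^ 2 + b * h * w + w ^ 2 / 4|
      ≤ 13 / 12 * (2 * q * h ^ 2 + ρ) ^ 2 + |b * h * w| + w ^ 2 / 4 := by
    have t1 := abs_add_le (13 / 12 * (2 * q * h ^ 2 + ρ) ^ 2 + b * h * w) (w ^ 2 / 4)
    have t2 := abs_add_le (13 / 12 * (2 * q * h ^ 2 + ρ) ^ 2) (b * h * w)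
    have e1 : |13 / 12 * (2 * q * h ^ 2 + ρ) ^ 2| = 13 / 12 * (2 * q * h ^ 2 + ρ) ^ 2 :=
      abs_of_nonneg (by positivity)
    have e2 : |w ^ 2 / 4| = w ^ 2 / 4 := abs_of_nonneg (by positivity)
    linarith
  have hle1 : h ^ 2 ≤ 1 := by nlinarith
  have h64 : h ^ 6 ≤ h ^ 4 := by
    nlinarith [mul_nonneg (pow_pos h0 4).le (by linarith : (0:ℝ) ≤ 1 - h ^ 2)]
  calc |13 / 12 * (2 * q * h ^ 2 + ρ) ^ 2 + b * h * w + w ^ 2 / 4|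
      ≤ 13 / 12 * (2 * q * h ^ 2 + ρ) ^ 2 + |b * h * w| + w ^ 2 / 4 := tri
  _ ≤ 13 / 12 * ((2 * |q| + 10 * M) * h ^ 2) ^ 2 + |b| * h * (12 * M * h ^ 3)
      + (12 * M * h ^ 3) ^ 2 / 4 := by linarith
  _ ≤ (13 / 12 * (2 * |q| + 10 * M) ^ 2 + 12 * |b| * M + 36 * M ^ 2) * h ^ 4 := by
    have hb : (0:ℝ) ≤ |b| := abs_nonneg b
    have : |b| * h * (12 * M * h ^ 3) = 12 * |b| * M * h ^ 4 := by ring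
    nlinarith [mul_nonneg (mul_nonneg hb hM) (sq_nonneg h), sq_nonneg M, h64,
      mul_le_mul_of_nonneg_left h64 (by positivity : (0:ℝ) ≤ 36 * M ^ 2)]

lemma sq_diff_bound (x y c K h : ℝ) (hh : 0 < h)
    (hx : |x - c * h ^ 2| ≤ K * h ^ 4) (hy : |y - c * h ^ 2| ≤ K * h ^ 4)
    (hxu : x ≤ 2 * c * h ^ 2) (hyu : y ≤ 2 * c * h ^ 2)
    (hxl : 0 ≤ x) (hyl : 0 ≤ y) :
    |x ^ 2 - y ^ 2| ≤ 8 * K * c * h ^ 6 := by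
  have hK : 0 ≤ K * h ^ 4 := (abs_nonneg _).trans hx
  have h1 : |x - y| ≤ 2 * (K * h ^ 4) := by
    have := abs_sub_le x (c * h ^ 2) y
    have := abs_sub_comm (c * h ^ 2) y
    linarith
  have h2 : |x + y| ≤ 4 * c * h ^ 2 := by
    rw [abs_of_nonneg (by linarith)]
    linarith
  have e : x ^ 2 - y ^ 2 = (x - y) * (x + y) := by ring
  rw [e, abs_mul]
  calc |x - y| * |x + y| ≤ (2 * (K * h ^ 4)) * (4 * c * h ^ 2) :=
        mul_le_mul h1 h2 (abs_nonneg _) (by linarith)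
  _ = 8 * K * c * h ^ 6 := by ring




open Filter Asymptotics Topology

/-- Jiang–Shu smoothness indicator of the sub-stencil `S_k`, `k ∈ {0,1,2}`, at
grid spacing `Δx`, built from the grid values `f(x₀ + mΔx)`. -/
noncomputable def betaJS (f : ℝ → ℝ) (x₀ : ℝ) (k : Fin 3) (Δx : ℝ) : ℝ :=
  if k = 0 then
    (13 / 12) * (f (x₀ - 2 * Δx) - 2 * f (x₀ - Δx) + f x₀) ^ 2
      + (1 / 4) * (f (x₀ - 2 * Δx) - 4 * f (x₀ - Δx) + 3 * f x₀) ^ 2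
  else if k = 1 then
    (13 / 12) * (f (x₀ - Δx) - 2 * f x₀ + f (x₀ + Δx)) ^ 2
      + (1 / 4) * (f (x₀ + Δx) - f (x₀ - Δx)) ^ 2
  else
    (13 / 12) * (f x₀ - 2 * f (x₀ + Δx) + f (x₀ + 2 * Δx)) ^ 2
      + (1 / 4) * (3 * f x₀ - 4 * f (x₀ + Δx) + f (x₀ + 2 * Δx)) ^ 2

/-- The ideal weights `d₀ = 1/10, d₁ = 6/10, d₂ = 3/10`. -/
noncomputable def dIdeal : Fin 3 → ℝ := ![1 / 10, 6 / 10, 3 / 10]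

/-- Unnormalized WENO-JS weight (with `ε = 0`). -/
noncomputable def alphaJS (f : ℝ → ℝ) (x₀ : ℝ) (k : Fin 3) (Δx : ℝ) : ℝ :=
  dIdeal k / (betaJS f x₀ k Δx) ^ 2

/-- Normalized WENO-JS nonlinear weight (with `ε = 0`). -/
noncomputable def omegaJS (f : ℝ → ℝ) (x₀ : ℝ) (k : Fin 3) (Δx : ℝ) : ℝ :=
  alphaJS f x₀ k Δx / (alphaJS f x₀ 0 Δx + alphaJS f x₀ 1 Δx + alphaJS f x₀ 2 Δx)

/-- Away from critical points (`f'(x₀) ≠ 0`), the WENO-JS nonlinear weights satisfy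
`ω_k - d_k = O(Δx²)` as `Δx → 0⁺`. -/
theorem wenoJS_weights_second_order (f : ℝ → ℝ) (hf : ContDiff ℝ (⊤ : ℕ∞) f) (x₀ : ℝ)
    (hf' : deriv f x₀ ≠ 0) :
    ∀ k : Fin 3,
      (fun Δx : ℝ => omegaJS f x₀ k Δx - dIdeal k) =O[𝓝[>] (0 : ℝ)] fun Δx => Δx ^ 2 := by
  obtain ⟨M, hM, htay⟩ := taylor2_bound f hf x₀
  set b := deriv f x₀ with hbdef
  set q := deriv (deriv f) x₀ / 2 with hqdef
  set err : ℝ → ℝ := fun t => f (x₀ + t) - (f x₀ + b * t + q * t ^ 2) with herr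
  set K : ℝ := 13 / 12 * (2 * |q| + 10 * M) ^ 2 + 12 * |b| * M + 36 * M ^ 2 + 1 with hK
  have hbne : b ≠ 0 := hf'
  have htay' : ∀ t : ℝ, |t| ≤ 1 → |err t| ≤ M * |t| ^ 3 := by
    intro t ht
    rw [herr]
    exact htay t ht
  clear_value err K
  clear_value b q
  have hKpos : 0 < K := by
    rw [hK]
    have t1 : (0:ℝ) ≤ 13 / 12 * (2 * |q| + 10 * M) ^ 2 := by positivity
    have t2 : (0:ℝ) ≤ 12 * |b| * M := mul_nonneg (by positivity) hM
    have t3 : (0:ℝ) ≤ 36 * M ^ 2 := by positivity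
    linarith
  have hb2 : 0 < b ^ 2 := by positivity
  -- eventual conditions
  have hev : ∀ᶠ h in 𝓝[>] (0:ℝ), 0 < h ∧ h ≤ 1 / 2 ∧ K * h ^ 2 ≤ b ^ 2 / 2 := by
    have e1 : ∀ᶠ h in 𝓝[>] (0:ℝ), 0 < h := eventually_mem_nhdsWithin
    have t0 : Tendsto (fun h : ℝ => h) (𝓝[>] (0:ℝ)) (𝓝 0) :=
      tendsto_id.mono_left nhdsWithin_le_nhds
    have e2 : ∀ᶠ h in 𝓝[>] (0:ℝ), h < 1 / 2 := t0.eventually_lt_const (by norm_num)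
    have t1 : Tendsto (fun h : ℝ => K * h ^ 2) (𝓝[>] (0:ℝ)) (𝓝 0) := by
      have hc : Continuous (fun h : ℝ => K * h ^ 2) := by fun_prop
      have h2 := hc.tendsto (0:ℝ)
      norm_num at h2
      exact h2.mono_left nhdsWithin_le_nhds
    have e3 : ∀ᶠ h in 𝓝[>] (0:ℝ), K * h ^ 2 < b ^ 2 / 2 :=
      t1.eventually_lt_const (by positivity)
    filter_upwards [e1, e2, e3] with h h1 h2 h3
    exact ⟨h1, h2.le, h3.le⟩
  -- key beta bound
  have hbeta : ∀ᶠ h in 𝓝[>] (0:ℝ), 0 < h ∧ K * h ^ 2 ≤ b ^ 2 / 2 ∧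
      ∀ j : Fin 3, |betaJS f x₀ j h - b ^ 2 * h ^ 2| ≤ K * h ^ 4 := by
    filter_upwards [hev] with h hcond
    obtain ⟨h0, h12, hKs⟩ := hcond
    refine ⟨h0, hKs, ?_⟩
    have h1 : h ≤ 1 := by linarith
    -- error bounds at the four stencil points
    have habs : ∀ m : ℝ, 0 < m → m * h ≤ 1 → |err (m * h)| ≤ M * m ^ 3 * h ^ 3 := by
      intro m hm hmh
      have h5 : |m * h| = m * h := abs_of_pos (by positivity)
      have := htay' (m * h) (by rw [h5]; exact hmh)
      calc |err (m * h)| ≤ M * |m * h| ^ 3 := this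
      _ = M * m ^ 3 * h ^ 3 := by rw [h5]; ring
    have habsneg : ∀ m : ℝ, 0 < m → m * h ≤ 1 → |err (-(m * h))| ≤ M * m ^ 3 * h ^ 3 := by
      intro m hm hmh
      have h5 : |(-(m * h))| = m * h := by rw [abs_neg]; exact abs_of_pos (by positivity)
      have := htay' (-(m * h)) (by rw [h5]; exact hmh)
      calc |err (-(m * h))| ≤ M * |(-(m * h))| ^ 3 := this
      _ = M * m ^ 3 * h ^ 3 := by rw [h5]; ring
    have hm2 : (2:ℝ) * h ≤ 1 := by linarith
    have hm1 : (1:ℝ) * h ≤ 1 := by linarith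
    have hu  := habsneg 2 (by norm_num) hm2   -- |err (-(2h))| ≤ 8Mh³
    have hv  := habsneg 1 (by norm_num) hm1
    have hv' := habs 1 (by norm_num) hm1
    have hu' := habs 2 (by norm_num) hm2
    rw [show ((1:ℝ))^3 = 1 by norm_num] at hv hv'
    -- value identities
    have Fm2 : f (x₀ - 2 * h) = f x₀ + b * (-(2 * h)) + q * (-(2 * h)) ^ 2 + err (-(2 * h)) := by
      have : err (-(2 * h)) = f (x₀ + (-(2 * h))) - (f x₀ + b * (-(2 * h)) + q * (-(2 * h)) ^ 2) := by rw [herr]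
      rw [show x₀ - 2 * h = x₀ + (-(2 * h)) by ring]
      linarith
    have Fm1 : f (x₀ - h) = f x₀ + b * (-h) + q * (-h) ^ 2 + err (-h) := by
      have : err (-h) = f (x₀ + (-h)) - (f x₀ + b * (-h) + q * (-h) ^ 2) := by rw [herr]
      rw [show x₀ - h = x₀ + (-h) by ring]
      linarith
    have Fp1 : f (x₀ + h) = f x₀ + b * h + q * h ^ 2 + err h := by
      have : err h = f (x₀ + h) - (f x₀ + b * h + q * h ^ 2) := by rw [herr]
      linarith
    have Fp2 : f (x₀ + 2 * h) = f x₀ + b * (2 * h) + q * (2 * h) ^ 2 + err (2 * h) := by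
      have : err (2 * h) = f (x₀ + 2 * h) - (f x₀ + b * (2 * h) + q * (2 * h) ^ 2) := by rw [herr]
      linarith
    have hveq : |err (-h)| ≤ M * h ^ 3 := by simpa using hv
    have hveq' : |err h| ≤ M * h ^ 3 := by simpa using hv'
    have hMh3 : 0 ≤ M * h ^ 3 := by positivity
    intro j
    have hKle : ∀ X : ℝ, |X| ≤ (13 / 12 * (2 * |q| + 10 * M) ^ 2 + 12 * |b| * M + 36 * M ^ 2) * h ^ 4
        → |X| ≤ K * h ^ 4 := by
      intro X hX
      have : (0:ℝ) < h ^ 4 := by positivity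
      rw [hK]; nlinarith
    fin_cases j
    · -- k = 0
      show |betaJS f x₀ 0 h - b ^ 2 * h ^ 2| ≤ K * h ^ 4
      set ρ := err (-(2 * h)) - 2 * err (-h) with hρdef
      set w := err (-(2 * h)) - 4 * err (-h) with hwdef
      have hρ : |ρ| ≤ 10 * M * h ^ 3 := by
        have := abs_sub (err (-(2 * h))) (2 * err (-h))
        have h7 : |2 * err (-h)| = 2 * |err (-h)| := by rw [abs_mul]; norm_num
        nlinarith [hu, hveq, abs_nonneg (err (-h))]
      have hw : |w| ≤ 12 * M * h ^ 3 := by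
        have := abs_sub (err (-(2 * h))) (4 * err (-h))
        have h7 : |4 * err (-h)| = 4 * |err (-h)| := by rw [abs_mul]; norm_num
        nlinarith [hu, hveq, abs_nonneg (err (-h))]
      have hid : betaJS f x₀ 0 h - b ^ 2 * h ^ 2
          = 13 / 12 * (2 * q * h ^ 2 + ρ) ^ 2 + b * h * w + w ^ 2 / 4 := by
        rw [show betaJS f x₀ 0 h = (13 / 12) * (f (x₀ - 2 * h) - 2 * f (x₀ - h) + f x₀) ^ 2
          + (1 / 4) * (f (x₀ - 2 * h) - 4 * f (x₀ - h) + 3 * f x₀) ^ 2 from rfl]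
        rw [Fm2, Fm1, hρdef, hwdef]
        ring
      rw [hid]
      exact hKle _ (beta_err b q M h ρ w h0 h1 hM hρ hw)
    · -- k = 1
      show |betaJS f x₀ 1 h - b ^ 2 * h ^ 2| ≤ K * h ^ 4
      set ρ := err (-h) + err h with hρdef
      set w := err h - err (-h) with hwdef
      have hρ : |ρ| ≤ 10 * M * h ^ 3 := by
        have := abs_add_le (err (-h)) (err h)
        nlinarith [hveq, hveq']
      have hw : |w| ≤ 12 * M * h ^ 3 := by
        have := abs_sub (err h) (err (-h))
        nlinarith [hveq, hveq']
      have hid : betaJS f x₀ 1 h - b ^ 2 * h ^ 2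
          = 13 / 12 * (2 * q * h ^ 2 + ρ) ^ 2 + b * h * w + w ^ 2 / 4 := by
        rw [show betaJS f x₀ 1 h = (13 / 12) * (f (x₀ - h) - 2 * f x₀ + f (x₀ + h)) ^ 2
          + (1 / 4) * (f (x₀ + h) - f (x₀ - h)) ^ 2 from rfl]
        rw [Fm1, Fp1, hρdef, hwdef]
        ring
      rw [hid]
      exact hKle _ (beta_err b q M h ρ w h0 h1 hM hρ hw)
    · -- k = 2
      show |betaJS f x₀ 2 h - b ^ 2 * h ^ 2| ≤ K * h ^ 4
      set ρ := err (2 * h) - 2 * err h with hρdef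
      set w := -(err (2 * h) - 4 * err h) with hwdef
      have hρ : |ρ| ≤ 10 * M * h ^ 3 := by
        have := abs_sub (err (2 * h)) (2 * err h)
        have h7 : |2 * err h| = 2 * |err h| := by rw [abs_mul]; norm_num
        nlinarith [hu', hveq', abs_nonneg (err h)]
      have hw : |w| ≤ 12 * M * h ^ 3 := by
        rw [hwdef, abs_neg]
        have := abs_sub (err (2 * h)) (4 * err h)
        have h7 : |4 * err h| = 4 * |err h| := by rw [abs_mul]; norm_num
        nlinarith [hu', hveq', abs_nonneg (err h)]
      have hid : betaJS f x₀ 2 h - b ^ 2 * h ^ 2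
          = 13 / 12 * (2 * q * h ^ 2 + ρ) ^ 2 + b * h * w + w ^ 2 / 4 := by
        rw [show betaJS f x₀ 2 h = (13 / 12) * (f x₀ - 2 * f (x₀ + h) + f (x₀ + 2 * h)) ^ 2
          + (1 / 4) * (3 * f x₀ - 4 * f (x₀ + h) + f (x₀ + 2 * h)) ^ 2 from rfl]
        rw [Fp1, Fp2, hρdef, hwdef]
        ring
      rw [hid]
      exact hKle _ (beta_err b q M h ρ w h0 h1 hM hρ hw)
  -- final: per k
  intro k
  rw [isBigO_iff]
  refine ⟨512 * K / b ^ 2, ?_⟩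
  filter_upwards [hbeta] with h hcond
  obtain ⟨h0, hKs, hβ⟩ := hcond
  set β0 := betaJS f x₀ 0 h with hβ0
  set β1 := betaJS f x₀ 1 h with hβ1
  set β2 := betaJS f x₀ 2 h with hβ2
  have hKh4 : K * h ^ 4 ≤ b ^ 2 / 2 * h ^ 2 := by nlinarith [sq_nonneg h, pow_pos h0 2]
  have lower : ∀ j : Fin 3, b ^ 2 / 2 * h ^ 2 ≤ betaJS f x₀ j h := by
    intro j
    have := hβ j
    rw [abs_le] at this
    linarith [this.1, hKh4]
  have upper : ∀ j : Fin 3, betaJS f x₀ j h ≤ 2 * b ^ 2 * h ^ 2 := by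
    intro j
    have := hβ j
    rw [abs_le] at this
    linarith [this.2, hKh4]
  have hL : (0:ℝ) < (b ^ 2 / 2 * h ^ 2) ^ 2 := by positivity
  have lower2 : ∀ j : Fin 3, (b ^ 2 / 2 * h ^ 2) ^ 2 ≤ (betaJS f x₀ j h) ^ 2 := by
    intro j
    exact pow_le_pow_left₀ (by positivity) (lower j) 2
  have upper2 : ∀ j : Fin 3, (betaJS f x₀ j h) ^ 2 ≤ (2 * b ^ 2 * h ^ 2) ^ 2 := by
    intro j
    have hnn : (0:ℝ) ≤ betaJS f x₀ j h := le_trans (by positivity) (lower j)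
    exact pow_le_pow_left₀ hnn (upper j) 2
  have pairE : ∀ i j : Fin 3, |(betaJS f x₀ i h) ^ 2 - (betaJS f x₀ j h) ^ 2|
      ≤ 8 * K * (b ^ 2) * h ^ 6 := by
    intro i j
    have hnn : ∀ j : Fin 3, (0:ℝ) ≤ betaJS f x₀ j h :=
      fun j => le_trans (by positivity) (lower j)
    exact sq_diff_bound _ _ _ _ _ h0 (hβ i) (hβ j) (upper i) (upper j) (hnn i) (hnn j)
  have hεU : (8 * K * (b ^ 2) * h ^ 6) * ((2 * b ^ 2 * h ^ 2) ^ 2) / ((b ^ 2 / 2 * h ^ 2) ^ 2) ^ 2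
      = 512 * K / b ^ 2 * h ^ 2 := by
    field_simp
    ring
  have hnorm : ‖h ^ 2‖ = h ^ 2 := by
    rw [Real.norm_eq_abs, abs_of_pos (by positivity)]
  rw [Real.norm_eq_abs, hnorm]
  have hd01 : (0:ℝ) < 1/10 := by norm_num
  have hd06 : (0:ℝ) < 6/10 := by norm_num
  have hd03 : (0:ℝ) < 3/10 := by norm_num
  fin_cases k
  · show |omegaJS f x₀ 0 h - dIdeal 0| ≤ 512 * K / b ^ 2 * h ^ 2
    have hb := omega_bound (β0 ^ 2) (β1 ^ 2) (β2 ^ 2)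
      ((b ^ 2 / 2 * h ^ 2) ^ 2) ((2 * b ^ 2 * h ^ 2) ^ 2) (8 * K * (b ^ 2) * h ^ 6)
      (1/10) (6/10) (3/10) hL (lower2 0) (lower2 1) (lower2 2) (upper2 1) (upper2 2)
      (pairE 1 0) (pairE 2 0) hd01 hd06 hd03 (by norm_num)
    rw [hεU] at hb
    have hω : omegaJS f x₀ 0 h - dIdeal 0
        = (1:ℝ)/10 / β0 ^ 2 / ((1:ℝ)/10 / β0 ^ 2 + 6/10 / β1 ^ 2 + 3/10 / β2 ^ 2) - 1/10 := by
      simp [omegaJS, alphaJS, dIdeal]; rfl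
    rw [hω]
    exact hb
  · show |omegaJS f x₀ 1 h - dIdeal 1| ≤ 512 * K / b ^ 2 * h ^ 2
    have hb := omega_bound (β1 ^ 2) (β0 ^ 2) (β2 ^ 2)
      ((b ^ 2 / 2 * h ^ 2) ^ 2) ((2 * b ^ 2 * h ^ 2) ^ 2) (8 * K * (b ^ 2) * h ^ 6)
      (6/10) (1/10) (3/10) hL (lower2 1) (lower2 0) (lower2 2) (upper2 0) (upper2 2)
      (pairE 0 1) (pairE 2 1) hd06 hd01 hd03 (by norm_num)
    rw [hεU] at hb
    rw [show (6:ℝ)/10 / β1 ^ 2 + 1/10 / β0 ^ 2 + 3/10 / β2 ^ 2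
      = 1/10 / β0 ^ 2 + 6/10 / β1 ^ 2 + 3/10 / β2 ^ 2 by ring] at hb
    have hω : omegaJS f x₀ 1 h - dIdeal 1
        = (6:ℝ)/10 / β1 ^ 2 / ((1:ℝ)/10 / β0 ^ 2 + 6/10 / β1 ^ 2 + 3/10 / β2 ^ 2) - 6/10 := by
      simp [omegaJS, alphaJS, dIdeal]; rfl
    rw [hω]
    exact hb
  · show |omegaJS f x₀ 2 h - dIdeal 2| ≤ 512 * K / b ^ 2 * h ^ 2
    have hb := omega_bound (β2 ^ 2) (β0 ^ 2) (β1 ^ 2)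
      ((b ^ 2 / 2 * h ^ 2) ^ 2) ((2 * b ^ 2 * h ^ 2) ^ 2) (8 * K * (b ^ 2) * h ^ 6)
      (3/10) (1/10) (6/10) hL (lower2 2) (lower2 0) (lower2 1) (upper2 0) (upper2 1)
      (pairE 0 2) (pairE 1 2) hd03 hd01 hd06 (by norm_num)
    rw [hεU] at hb
    rw [show (3:ℝ)/10 / β2 ^ 2 + 1/10 / β0 ^ 2 + 6/10 / β1 ^ 2
      = 1/10 / β0 ^ 2 + 6/10 / β1 ^ 2 + 3/10 / β2 ^ 2 by ring] at hb
    have hω : omegaJS f x₀ 2 h - dIdeal 2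
        = (3:ℝ)/10 / β2 ^ 2 / ((1:ℝ)/10 / β0 ^ 2 + 6/10 / β1 ^ 2 + 3/10 / β2 ^ 2) - 3/10 := by
      simp [omegaJS, alphaJS, dIdeal]; rfl
    rw [hω]
    exact hb
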